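/- Let x = (X₁,Y₁,X₂,Y₂) ∈ ℂ⁴ satisfy X₁ ≠ X₂, Y₁² = Q(X₁) and Y₂² = Q(X₂). Then, with u₂, u₄, u₅, u₇ regarded as functions on the open set {X₁ ≠ X₂} ⊂ ℂ⁴, the following hold at x: (𝓛₃*u₂)(x) = −u₅(x); (𝓛₃*u₄)(x) = −2u₇(x); (𝓛₃*u₅)(x) = −35u₂⁴ − 42u₂²u₄ − 3u₄² − 2y₄(5u₂² + u₄) + 4y₆u₂ − y₈ evaluated at x; (𝓛₃*u₇)(x) = −7(3u₂⁵ + 10u₂³u₄ + 3u₂u₄²) − 10y₄(u₂³ + u₂u₄) + 2y₆(3u₂² + u₄) − 3y₈u₂ + y₁₀ evaluated at x. -/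

import Mathlib

/- Context: ℂ⁴ is modelled as `Fin 4 → ℂ` with coordinates 0 ↦ X₁, 1 ↦ Y₁, 2 ↦ X₂,
3 ↦ Y₂.  `pd i f x` is the complex partial derivative of `f` along the `i`-th
coordinate direction.  Q(X) = X⁷ + y₄X⁵ − y₆X⁴ + y₈X³ − y₁₀X² + y₁₂X − y₁₄,
Q'(X) = 7X⁶ + 5y₄X⁴ − 4y₆X³ + 3y₈X² − 2y₁₀X + y₁₂. -/

noncomputable section

/-- Complex partial derivative along the `i`-th coordinate direction. -/
def pd (i : Fin 4) (f : (Fin 4 → ℂ) → ℂ) (x : Fin 4 → ℂ) : ℂ :=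
  fderiv ℂ f x (Pi.single i 1)

def Qf (y4 y6 y8 y10 y12 y14 X : ℂ) : ℂ :=
  X ^ 7 + y4 * X ^ 5 - y6 * X ^ 4 + y8 * X ^ 3 - y10 * X ^ 2 + y12 * X - y14

def Qd (y4 y6 y8 y10 y12 X : ℂ) : ℂ :=
  7 * X ^ 6 + 5 * y4 * X ^ 4 - 4 * y6 * X ^ 3 + 3 * y8 * X ^ 2 - 2 * y10 * X + y12

/-- `D₁ f = 2Y₁·∂f/∂X₁ + Q'(X₁)·∂f/∂Y₁`. -/
def D1 (y4 y6 y8 y10 y12 : ℂ) (f : (Fin 4 → ℂ) → ℂ) (x : Fin 4 → ℂ) : ℂ :=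
  2 * x 1 * pd 0 f x + Qd y4 y6 y8 y10 y12 (x 0) * pd 1 f x

/-- `D₂ f = 2Y₂·∂f/∂X₂ + Q'(X₂)·∂f/∂Y₂`. -/
def D2 (y4 y6 y8 y10 y12 : ℂ) (f : (Fin 4 → ℂ) → ℂ) (x : Fin 4 → ℂ) : ℂ :=
  2 * x 3 * pd 2 f x + Qd y4 y6 y8 y10 y12 (x 2) * pd 3 f x

/-- `𝓛₃* f = (D₂f − D₁f)/(X₁ − X₂)`. -/
def L3 (y4 y6 y8 y10 y12 : ℂ) (f : (Fin 4 → ℂ) → ℂ) (x : Fin 4 → ℂ) : ℂ :=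
  (D2 y4 y6 y8 y10 y12 f x - D1 y4 y6 y8 y10 y12 f x) / (x 0 - x 2)

def u2f (x : Fin 4 → ℂ) : ℂ := (x 0 + x 2) / 2
def u4f (x : Fin 4 → ℂ) : ℂ := (x 0 - x 2) ^ 2 / 4
def u5f (x : Fin 4 → ℂ) : ℂ := (x 1 - x 3) / (x 0 - x 2)
def u7f (x : Fin 4 → ℂ) : ℂ := (x 1 + x 3) / 2

/-
The operator `𝓛₃*` is differentiation along the vector field
`V = (−2Y₁, −Q'(X₁), 2Y₂, Q'(X₂)) / (X₁ − X₂)`, so each `𝓛₃* uᵢ` follows from the chain rule.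
Only `u₅` needs the curve equations: they turn `u₅ (Y₁ + Y₂) = (Y₁² − Y₂²)/(X₁ − X₂)` into the
divided difference `(Q(X₁) − Q(X₂))/(X₁ − X₂)`. What remains are two polynomial identities for
`Q` in the symmetric coordinates `s = u₂`, `q = u₄`: the trapezoidal-rule error for integrating
`Q'` from `X₂` to `X₁`, and the difference `Q'(X₂) − Q'(X₁)`.
-/

section L3Derivation

variable {y4 y6 y8 y10 y12 : ℂ}

variable (y4 y6 y8 y10 y12) in
def L3Field (x : Fin 4 → ℂ) : Fin 4 → ℂ :=
  (x 0 - x 2)⁻¹ • ![-(2 * x 1), -Qd y4 y6 y8 y10 y12 (x 0), 2 * x 3, Qd y4 y6 y8 y10 y12 (x 2)]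

theorem L3_eq_of_hasFDerivAt {f : (Fin 4 → ℂ) → ℂ} {f' : (Fin 4 → ℂ) →L[ℂ] ℂ}
    {x : Fin 4 → ℂ} (hf : HasFDerivAt f f' x) :
    L3 y4 y6 y8 y10 y12 f x = f' (L3Field y4 y6 y8 y10 y12 x) := by
  have hV : L3Field y4 y6 y8 y10 y12 x = (x 0 - x 2)⁻¹ •
      ((-(2 * x 1)) • Pi.single 0 1 + (-Qd y4 y6 y8 y10 y12 (x 0)) • Pi.single 1 1 +
        (2 * x 3) • Pi.single 2 1 + Qd y4 y6 y8 y10 y12 (x 2) • Pi.single 3 1) := by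
    ext i; fin_cases i <;> simp [L3Field]
  rw [hV, L3, D1, D2, pd, pd, pd, pd, hf.fderiv]
  simp only [map_add, map_smul, smul_eq_mul]
  ring

theorem hasFDerivAt_coord (j : Fin 4) (x : Fin 4 → ℂ) :
    HasFDerivAt (fun y : Fin 4 → ℂ => y j)
      (ContinuousLinearMap.proj (R := ℂ) (φ := fun _ => ℂ) j) x :=
  hasFDerivAt_apply j x

theorem L3_u2f (x : Fin 4 → ℂ) : L3 y4 y6 y8 y10 y12 u2f x = -u5f x := by
  have h := ((hasFDerivAt_coord 0 x).add (hasFDerivAt_coord 2 x)).mul_const (2⁻¹ : ℂ)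
  rw [L3_eq_of_hasFDerivAt (f := u2f) h]
  simp only [L3Field, Pi.smul_apply, smul_eq_mul, add_apply, smul_apply,
    ContinuousLinearMap.proj_apply, Matrix.cons_val, u5f]
  ring

theorem L3_u4f {x : Fin 4 → ℂ} (hx : x 0 ≠ x 2) :
    L3 y4 y6 y8 y10 y12 u4f x = -2 * u7f x := by
  have h := (((hasFDerivAt_coord 0 x).sub (hasFDerivAt_coord 2 x)).pow 2).mul_const (4⁻¹ : ℂ)
  rw [L3_eq_of_hasFDerivAt (f := u4f) h]
  simp only [L3Field, Pi.smul_apply, smul_eq_mul, sub_apply, smul_apply, Pi.sub_apply,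
    ContinuousLinearMap.proj_apply, Matrix.cons_val, u7f]
  field_simp [sub_ne_zero.2 hx]
  ring

theorem L3_u5f {x : Fin 4 → ℂ} (hx : x 0 ≠ x 2) :
    L3 y4 y6 y8 y10 y12 u5f x =
      (2 * (u5f x * (x 1 + x 3)) - (Qd y4 y6 y8 y10 y12 (x 0) + Qd y4 y6 y8 y10 y12 (x 2)))
        / (x 0 - x 2) ^ 2 := by
  have hinv := (hasFDerivAt_inv (sub_ne_zero.2 hx)).comp x
    ((hasFDerivAt_coord 0 x).sub (hasFDerivAt_coord 2 x))
  have h := ((hasFDerivAt_coord 1 x).sub (hasFDerivAt_coord 3 x)).mul hinv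
  rw [L3_eq_of_hasFDerivAt (f := u5f) h]
  simp only [L3Field, Pi.smul_apply, smul_eq_mul, add_apply, sub_apply, smul_apply, Pi.sub_apply,
    ContinuousLinearMap.comp_apply, ContinuousLinearMap.proj_apply,
    ContinuousLinearMap.toSpanSingleton_apply, Function.comp_apply, Matrix.cons_val, u5f]
  field_simp [sub_ne_zero.2 hx]
  ring

theorem L3_u7f (x : Fin 4 → ℂ) :
    L3 y4 y6 y8 y10 y12 u7f x =
      (Qd y4 y6 y8 y10 y12 (x 2) - Qd y4 y6 y8 y10 y12 (x 0)) / (x 0 - x 2) / 2 := by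
  have h := ((hasFDerivAt_coord 1 x).add (hasFDerivAt_coord 3 x)).mul_const (2⁻¹ : ℂ)
  rw [L3_eq_of_hasFDerivAt (f := u7f) h]
  simp only [L3Field, Pi.smul_apply, smul_eq_mul, add_apply, smul_apply,
    ContinuousLinearMap.proj_apply, Matrix.cons_val]
  ring

end L3Derivation

section DividedDifferences

variable (y4 y6 y8 y10 y12 y14 : ℂ) {a b s q : ℂ}

theorem two_mul_Qf_sub_Qf (hs : a + b = 2 * s) (hq : (a - b) ^ 2 = 4 * q) :
    2 * (Qf y4 y6 y8 y10 y12 y14 a - Qf y4 y6 y8 y10 y12 y14 b) =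
      (a - b) * (Qd y4 y6 y8 y10 y12 a + Qd y4 y6 y8 y10 y12 b) +
      (a - b) ^ 3 * (-35 * s ^ 4 - 42 * s ^ 2 * q - 3 * q ^ 2
        - 2 * y4 * (5 * s ^ 2 + q) + 4 * y6 * s - y8) := by
  obtain rfl : a = 2 * s - b := by linear_combination hs
  obtain rfl : q = (2 * s - b - b) ^ 2 / 4 := by linear_combination -hq / 4
  unfold Qf Qd
  ring

theorem Qd_sub_Qd (hs : a + b = 2 * s) (hq : (a - b) ^ 2 = 4 * q) :
    Qd y4 y6 y8 y10 y12 b - Qd y4 y6 y8 y10 y12 a =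
      2 * (a - b) * (-7 * (3 * s ^ 5 + 10 * s ^ 3 * q + 3 * s * q ^ 2)
        - 10 * y4 * (s ^ 3 + s * q) + 2 * y6 * (3 * s ^ 2 + q) - 3 * y8 * s + y10) := by
  obtain rfl : a = 2 * s - b := by linear_combination hs
  obtain rfl : q = (2 * s - b - b) ^ 2 / 4 := by linear_combination -hq / 4
  unfold Qd
  ring

end DividedDifferences

theorem add_eq_two_mul_u2f (x : Fin 4 → ℂ) : x 0 + x 2 = 2 * u2f x := by
  rw [u2f]; ring

theorem sub_sq_eq_four_mul_u4f (x : Fin 4 → ℂ) : (x 0 - x 2) ^ 2 = 4 * u4f x := by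
  rw [u4f]; ring

theorem u5f_mul_add {y4 y6 y8 y10 y12 y14 : ℂ} {x : Fin 4 → ℂ}
    (h1 : (x 1) ^ 2 = Qf y4 y6 y8 y10 y12 y14 (x 0))
    (h2 : (x 3) ^ 2 = Qf y4 y6 y8 y10 y12 y14 (x 2)) :
    u5f x * (x 1 + x 3) =
      (Qf y4 y6 y8 y10 y12 y14 (x 0) - Qf y4 y6 y8 y10 y12 y14 (x 2)) / (x 0 - x 2) := by
  rw [u5f, div_mul_eq_mul_div, ← h1, ← h2]
  ring

/-- At any point of the curve-square with `X₁ ≠ X₂`, the derivation `𝓛₃*` acts on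
`u₂, u₄, u₅, u₇` by the stated polynomial formulas. -/
theorem statement9 (y4 y6 y8 y10 y12 y14 : ℂ) (x : Fin 4 → ℂ)
    (hx : x 0 ≠ x 2)
    (h1 : (x 1) ^ 2 = Qf y4 y6 y8 y10 y12 y14 (x 0))
    (h2 : (x 3) ^ 2 = Qf y4 y6 y8 y10 y12 y14 (x 2)) :
    L3 y4 y6 y8 y10 y12 u2f x = -(u5f x) ∧
    L3 y4 y6 y8 y10 y12 u4f x = -2 * u7f x ∧
    L3 y4 y6 y8 y10 y12 u5f x =
      -35 * (u2f x) ^ 4 - 42 * (u2f x) ^ 2 * u4f x - 3 * (u4f x) ^ 2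
        - 2 * y4 * (5 * (u2f x) ^ 2 + u4f x) + 4 * y6 * u2f x - y8 ∧
    L3 y4 y6 y8 y10 y12 u7f x =
      -7 * (3 * (u2f x) ^ 5 + 10 * (u2f x) ^ 3 * u4f x + 3 * u2f x * (u4f x) ^ 2)
        - 10 * y4 * ((u2f x) ^ 3 + u2f x * u4f x)
        + 2 * y6 * (3 * (u2f x) ^ 2 + u4f x) - 3 * y8 * u2f x + y10 := by
  have hd : x 0 - x 2 ≠ 0 := sub_ne_zero.2 hx
  have hs := add_eq_two_mul_u2f x
  have hq := sub_sq_eq_four_mul_u4f x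
  refine ⟨L3_u2f x, L3_u4f hx, ?_, ?_⟩
  · rw [L3_u5f hx, u5f_mul_add h1 h2, mul_div_assoc',
      two_mul_Qf_sub_Qf y4 y6 y8 y10 y12 y14 hs hq]
    field_simp
    ring
  · rw [L3_u7f, Qd_sub_Qd y4 y6 y8 y10 y12 hs hq]
    field_simp

end
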